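/- The Hardy–Littlewood maximal operator $M$ is not bounded on the Morrey space $\mathcal{M}_{1,1/2}(\mathbb{R})$: there exists a locally integrable function $f : \mathbb{R} \to [0,\infty)$ (namely $f = \sum_{k=0}^{\infty} \chi_{[k^2, k^2+1]}$) such that $\|f\|_{\mathcal{M}_{1,1/2}(\mathbb{R})} < \infty$ but $\|Mf\|_{\mathcal{M}_{1,1/2}(\mathbb{R})} = \infty$. -/

import Mathlib

/-!
Take `f = 𝟙_S` with `S = ⋃ₖ [k², k² + 1]`. Two squares `i² < j²` differ by at least `(j - i)²`,
so an interval of length `t` meets at most `√(t + 1) + 1` blocks and `∫_I f ≤ 3 √|I|`: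
the Morrey norm of `f` is finite. On the gap `(k² + 1, (k + 1)²)` the block `[k², k² + 1]` gives
`Mf(x) ≥ 1 / (x - k² + 1)`, whose integral over the gap is `log (k + 1)`. The interval
`(0, (2m + 1)²)` contains the `m + 1` gaps with `m ≤ k ≤ 2m`, so its Morrey quotient for `Mf` is at
least `log (m + 1) / 2`, which is unbounded.
-/

open MeasureTheory Set
open scoped ENNReal NNReal

/-- The one-dimensional Hardy–Littlewood maximal function
`Mf(x) = sup_{I ∋ x} |I|⁻¹ ∫_I |f|`, supremum over bounded open intervals containing `x`. -/
noncomputable def maximalFn1 (f : ℝ → ℝ) (x : ℝ) : ℝ≥0∞ :=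
  ⨆ (a : ℝ) (b : ℝ) (_ : a < b) (_ : x ∈ Set.Ioo a b),
    (ENNReal.ofReal (b - a))⁻¹ * ∫⁻ y in Set.Ioo a b, ‖f y‖₊

/-- The one-dimensional Morrey "norm" `sup_I |I|^{λ-1} ∫_I |f|`. -/
noncomputable def morreyNorm1 (lam : ℝ) (f : ℝ → ℝ) : ℝ≥0∞ :=
  ⨆ (a : ℝ) (b : ℝ) (_ : a < b),
    ENNReal.ofReal ((b - a) ^ (lam - 1)) * ∫⁻ y in Set.Ioo a b, ‖f y‖₊

/-- The one-dimensional Morrey "norm" of an `ℝ≥0∞`-valued function. -/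
noncomputable def morreyNorm1E (lam : ℝ) (g : ℝ → ℝ≥0∞) : ℝ≥0∞ :=
  ⨆ (a : ℝ) (b : ℝ) (_ : a < b),
    ENNReal.ofReal ((b - a) ^ (lam - 1)) * ∫⁻ y in Set.Ioo a b, g y

lemma le_maximalFn1 (f : ℝ → ℝ) {a b x : ℝ} (hab : a < b) (hx : x ∈ Ioo a b) :
    (ENNReal.ofReal (b - a))⁻¹ * ∫⁻ y in Ioo a b, ‖f y‖₊ ≤ maximalFn1 f x :=
  le_iSup_of_le a <| le_iSup_of_le b <| le_iSup_of_le hab <| le_iSup_of_le hx le_rfl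

lemma le_morreyNorm1E (lam : ℝ) (g : ℝ → ℝ≥0∞) {a b : ℝ} (hab : a < b) :
    ENNReal.ofReal ((b - a) ^ (lam - 1)) * ∫⁻ y in Ioo a b, g y ≤ morreyNorm1E lam g :=
  le_iSup_of_le a <| le_iSup_of_le b <| le_iSup_of_le hab le_rfl

lemma morreyNorm1_le {lam : ℝ} {f : ℝ → ℝ} {C : ℝ≥0∞}
    (h : ∀ a b, a < b → ENNReal.ofReal ((b - a) ^ (lam - 1)) * ∫⁻ y in Ioo a b, ‖f y‖₊ ≤ C) :
    morreyNorm1 lam f ≤ C :=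
  iSup_le fun a => iSup_le fun b => iSup_le fun hab => h a b hab

lemma setLIntegral_nnnorm_indicator_one {α : Type*} [MeasurableSpace α] (μ : Measure α)
    {s : Set α} (hs : MeasurableSet s) (t : Set α) :
    ∫⁻ y in t, ‖s.indicator (1 : α → ℝ) y‖₊ ∂μ = μ (s ∩ t) := by
  simp_rw [nnnorm_indicator_eq_indicator_nnnorm, Pi.one_apply, nnnorm_one, ENNReal.coe_indicator,
    ENNReal.coe_one]
  rw [← Pi.one_def, lintegral_indicator_one hs, Measure.restrict_apply hs]

lemma setLIntegral_Ioo_ofReal_inv_sub {c A B : ℝ} (hcA : c < A) (hAB : A ≤ B) :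
    ∫⁻ x in Ioo A B, ENNReal.ofReal (x - c)⁻¹ = ENNReal.ofReal (Real.log ((B - c) / (A - c))) := by
  have hcont : ContinuousOn (fun x => (x - c)⁻¹) (Icc A B) :=
    (continuousOn_id.sub continuousOn_const).inv₀ fun x hx => (sub_pos.2 (hcA.trans_le hx.1)).ne'
  have hpos : ∀ᵐ x ∂volume.restrict (Ioo A B), 0 ≤ (x - c)⁻¹ :=
    (ae_restrict_iff' measurableSet_Ioo).2 <| .of_forall fun x hx =>
      inv_nonneg.2 (sub_nonneg.2 (hcA.trans hx.1).le)
  rw [← ofReal_integral_eq_lintegral_ofReal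
    (hcont.integrableOn_Icc.mono_set Ioo_subset_Icc_self) hpos,
    ← integral_Ioc_eq_integral_Ioo, ← intervalIntegral.integral_of_le hAB,
    intervalIntegral.integral_comp_sub_right (fun x => x⁻¹),
    integral_inv_of_pos (by linarith) (by linarith)]

lemma rpow_half_sub_one_mul_sqrt {t : ℝ} (ht : 0 < t) : t ^ ((1 : ℝ) / 2 - 1) * √t = 1 := by
  rw [Real.rpow_sub ht, Real.rpow_one, ← Real.sqrt_eq_rpow, div_mul_eq_mul_div,
    Real.mul_self_sqrt ht.le, div_self ht.ne']

lemma sub_le_sqrt_sub_of_lt_sq {c d : ℝ} {i j : ℕ} (hi : c < (i : ℝ) ^ 2) (hj : (j : ℝ) ^ 2 < d) :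
    (j : ℝ) - i ≤ √(d - c) := by
  rcases le_total i j with hij | hji
  · have hij' : (i : ℝ) ≤ j := by exact_mod_cast hij
    refine (le_abs_self _).trans (Real.abs_le_sqrt ?_)
    nlinarith [mul_nonneg i.cast_nonneg (sub_nonneg.2 hij')]
  · exact (sub_nonpos.2 (by exact_mod_cast hji)).trans (Real.sqrt_nonneg _)

lemma card_le_sqrt_add_one_of_sq_mem_Ioo {c d : ℝ} (K : Finset ℕ)
    (hK : ∀ k ∈ K, c < (k : ℝ) ^ 2 ∧ (k : ℝ) ^ 2 < d) : (K.card : ℝ) ≤ √(d - c) + 1 := by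
  rcases K.eq_empty_or_nonempty with rfl | hne
  · simp only [Finset.card_empty, Nat.cast_zero]
    positivity
  have hsub : K ⊆ Finset.Icc (K.min' hne) (K.max' hne) := fun k hk =>
    Finset.mem_Icc.2 ⟨K.min'_le k hk, K.le_max' k hk⟩
  have hspread := sub_le_sqrt_sub_of_lt_sq (hK _ (K.min'_mem hne)).1 (hK _ (K.max'_mem hne)).2
  calc (K.card : ℝ) ≤ ((K.max' hne + 1 - K.min' hne : ℕ) : ℝ) := by
        rw [← Nat.card_Icc]
        exact_mod_cast Finset.card_le_card hsub
    _ = (K.max' hne : ℝ) - K.min' hne + 1 := by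
        rw [Nat.cast_sub (Nat.le_succ_of_le (K.min'_le_max' hne))]
        push_cast
        ring
    _ ≤ √(d - c) + 1 := by linarith

def squareBlocks : Set ℝ := ⋃ k : ℕ, Icc ((k : ℝ) ^ 2) ((k : ℝ) ^ 2 + 1)

lemma measurableSet_squareBlocks : MeasurableSet squareBlocks :=
  .iUnion fun _ => measurableSet_Icc

lemma volume_squareBlocks_inter_Ioo_le {a b : ℝ} (hab : a ≤ b) :
    volume (squareBlocks ∩ Ioo a b) ≤ ENNReal.ofReal (3 * √(b - a)) := by
  have ht : 0 ≤ b - a := sub_nonneg.2 hab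
  rcases le_total (b - a) 1 with hshort | hlong
  · have hle_sqrt : b - a ≤ √(b - a) := (Real.le_sqrt ht ht).2 (by nlinarith)
    calc volume (squareBlocks ∩ Ioo a b) ≤ volume (Ioo a b) := measure_mono inter_subset_right
      _ = ENNReal.ofReal (b - a) := Real.volume_Ioo
      _ ≤ _ := ENNReal.ofReal_le_ofReal (by linarith [Real.sqrt_nonneg (b - a)])
  set K := (Finset.range ⌈b⌉₊).filter fun k : ℕ => a - 1 < (k : ℝ) ^ 2 ∧ (k : ℝ) ^ 2 < b
  have hcover : squareBlocks ∩ Ioo a b ⊆ ⋃ k ∈ K, Icc ((k : ℝ) ^ 2) ((k : ℝ) ^ 2 + 1) := by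
    rintro x ⟨hx, hxa, hxb⟩
    obtain ⟨k, hk⟩ := mem_iUnion.1 hx
    have hk_le : (k : ℝ) ≤ (k : ℝ) ^ 2 := by exact_mod_cast Nat.le_self_pow two_ne_zero k
    refine mem_biUnion (Finset.mem_filter.2 ⟨Finset.mem_range.2 ?_, ?_, ?_⟩) hk
    · exact Nat.lt_ceil.2 (by linarith [hk.1])
    · linarith [hk.2]
    · linarith [hk.1]
  have hcard : (K.card : ℝ) ≤ 3 * √(b - a) := by
    have hK := card_le_sqrt_add_one_of_sq_mem_Ioo K fun k hk => (Finset.mem_filter.1 hk).2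
    have h1 : 1 ≤ √(b - a) := Real.one_le_sqrt.2 hlong
    have h2 : √(b - (a - 1)) ≤ 2 * √(b - a) := by
      rw [Real.sqrt_le_left (by positivity), mul_pow, Real.sq_sqrt ht]
      linarith
    linarith
  calc volume (squareBlocks ∩ Ioo a b)
      ≤ volume (⋃ k ∈ K, Icc ((k : ℝ) ^ 2) ((k : ℝ) ^ 2 + 1)) := measure_mono hcover
    _ ≤ ∑ k ∈ K, volume (Icc ((k : ℝ) ^ 2) ((k : ℝ) ^ 2 + 1)) := measure_biUnion_finset_le _ _
    _ = ENNReal.ofReal K.card := by simp [Real.volume_Icc]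
    _ ≤ _ := ENNReal.ofReal_le_ofReal hcard

lemma morreyNorm1_squareBlocks_indicator_le :
    morreyNorm1 (1 / 2) (squareBlocks.indicator 1) ≤ 3 := by
  refine morreyNorm1_le fun a b hab => ?_
  have ht : 0 < b - a := sub_pos.2 hab
  rw [setLIntegral_nnnorm_indicator_one _ measurableSet_squareBlocks]
  calc ENNReal.ofReal ((b - a) ^ ((1 : ℝ) / 2 - 1)) * volume (squareBlocks ∩ Ioo a b)
      ≤ ENNReal.ofReal ((b - a) ^ ((1 : ℝ) / 2 - 1)) * ENNReal.ofReal (3 * √(b - a)) := by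
        gcongr
        exact volume_squareBlocks_inter_Ioo_le hab.le
    _ = 3 := by
        rw [← ENNReal.ofReal_mul (by positivity), mul_left_comm, rpow_half_sub_one_mul_sqrt ht]
        norm_num

lemma ofReal_inv_le_maximalFn1_squareBlocks_indicator (k : ℕ) {x : ℝ} (hx : (k : ℝ) ^ 2 + 1 < x) :
    ENNReal.ofReal (x - ((k : ℝ) ^ 2 - 1))⁻¹ ≤ maximalFn1 (squareBlocks.indicator 1) x := by
  set I := Ioo ((k : ℝ) ^ 2 - 1 / 2) (x + 1 / 2)
  have hblock : Icc ((k : ℝ) ^ 2) ((k : ℝ) ^ 2 + 1) ⊆ squareBlocks ∩ I :=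
    fun y hy => ⟨mem_iUnion.2 ⟨k, hy⟩, by linarith [hy.1], by linarith [hy.2]⟩
  have hmass : 1 ≤ ∫⁻ y in I, ‖squareBlocks.indicator (1 : ℝ → ℝ) y‖₊ := by
    rw [setLIntegral_nnnorm_indicator_one _ measurableSet_squareBlocks]
    calc (1 : ℝ≥0∞) = volume (Icc ((k : ℝ) ^ 2) ((k : ℝ) ^ 2 + 1)) := by simp [Real.volume_Icc]
      _ ≤ volume (squareBlocks ∩ I) := measure_mono hblock
  calc ENNReal.ofReal (x - ((k : ℝ) ^ 2 - 1))⁻¹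
      = (ENNReal.ofReal (x + 1 / 2 - ((k : ℝ) ^ 2 - 1 / 2)))⁻¹ * 1 := by
        rw [mul_one, ENNReal.ofReal_inv_of_pos (by linarith)]
        ring_nf
    _ ≤ (ENNReal.ofReal (x + 1 / 2 - ((k : ℝ) ^ 2 - 1 / 2)))⁻¹ *
          ∫⁻ y in I, ‖squareBlocks.indicator (1 : ℝ → ℝ) y‖₊ := by gcongr
    _ ≤ maximalFn1 (squareBlocks.indicator 1) x :=
        le_maximalFn1 _ (by linarith) ⟨by linarith, by linarith⟩

lemma ofReal_log_le_setLIntegral_maximalFn1 (k : ℕ) :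
    ENNReal.ofReal (Real.log (k + 1)) ≤
      ∫⁻ x in Ioo ((k : ℝ) ^ 2 + 1) (((k : ℝ) + 1) ^ 2),
        maximalFn1 (squareBlocks.indicator 1) x := by
  have hk : (0 : ℝ) ≤ k := k.cast_nonneg
  calc ENNReal.ofReal (Real.log (k + 1))
      = ∫⁻ x in Ioo ((k : ℝ) ^ 2 + 1) (((k : ℝ) + 1) ^ 2),
          ENNReal.ofReal (x - ((k : ℝ) ^ 2 - 1))⁻¹ := by
        rw [setLIntegral_Ioo_ofReal_inv_sub (by linarith) (by nlinarith)]
        congr 2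
        field_simp
        ring
    _ ≤ _ := setLIntegral_mono' measurableSet_Ioo fun x hx =>
        ofReal_inv_le_maximalFn1_squareBlocks_indicator k hx.1

lemma ofReal_mul_log_le_setLIntegral_maximalFn1 (m : ℕ) :
    ENNReal.ofReal ((m + 1) * Real.log (m + 1)) ≤
      ∫⁻ x in Ioo 0 ((2 * (m : ℝ) + 1) ^ 2), maximalFn1 (squareBlocks.indicator 1) x := by
  set gap : ℕ → Set ℝ := fun k => Ioo ((k : ℝ) ^ 2 + 1) (((k : ℝ) + 1) ^ 2)
  have hgaps_sub : ⋃ k ∈ Finset.Icc m (2 * m), gap k ⊆ Ioo 0 ((2 * (m : ℝ) + 1) ^ 2) := by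
    refine iUnion₂_subset fun k hk x hx => ⟨by linarith [hx.1, sq_nonneg (k : ℝ)], ?_⟩
    have hk2 : (k : ℝ) ≤ 2 * m := by exact_mod_cast (Finset.mem_Icc.1 hk).2
    nlinarith [hx.2, k.cast_nonneg (α := ℝ)]
  have hgaps_disj : (Finset.Icc m (2 * m) : Set ℕ).PairwiseDisjoint gap := by
    intro i hi j hj hij
    wlog h : i < j generalizing i j
    · exact (this hj hi hij.symm (by omega)).symm
    have hij' : (i : ℝ) + 1 ≤ j := by exact_mod_cast h
    refine disjoint_left.2 fun x hxi hxj => ?_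
    nlinarith [hxi.2, hxj.1, i.cast_nonneg (α := ℝ)]
  have hlog : ∀ k ∈ Finset.Icc m (2 * m), Real.log (m + 1) ≤ Real.log (k + 1) := fun k hk => by
    have hmk : (m : ℝ) ≤ k := by exact_mod_cast (Finset.mem_Icc.1 hk).1
    exact Real.log_le_log (by positivity) (by linarith)
  calc ENNReal.ofReal ((m + 1) * Real.log (m + 1))
      = ∑ _k ∈ Finset.Icc m (2 * m), ENNReal.ofReal (Real.log (m + 1)) := by
        rw [Finset.sum_const, Nat.card_Icc, nsmul_eq_mul, ENNReal.ofReal_mul (by positivity),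
          show 2 * m + 1 - m = m + 1 by omega]
        norm_cast
    _ ≤ ∑ k ∈ Finset.Icc m (2 * m), ∫⁻ x in gap k, maximalFn1 (squareBlocks.indicator 1) x :=
        Finset.sum_le_sum fun k hk => (ENNReal.ofReal_le_ofReal (hlog k hk)).trans
          (ofReal_log_le_setLIntegral_maximalFn1 k)
    _ = ∫⁻ x in ⋃ k ∈ Finset.Icc m (2 * m), gap k, maximalFn1 (squareBlocks.indicator 1) x :=
        (lintegral_biUnion_finset hgaps_disj (fun _ _ => measurableSet_Ioo) _).symm
    _ ≤ _ := lintegral_mono_set hgaps_sub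

lemma ofReal_log_div_two_le_morreyNorm1E (m : ℕ) :
    ENNReal.ofReal (Real.log (m + 1) / 2) ≤
      morreyNorm1E (1 / 2) (maximalFn1 (squareBlocks.indicator 1)) := by
  have hm : (0 : ℝ) ≤ m := m.cast_nonneg
  have hs : (0 : ℝ) < 2 * m + 1 := by positivity
  have hscale : ((2 * (m : ℝ) + 1) ^ 2 - 0) ^ ((1 : ℝ) / 2 - 1) = (2 * (m : ℝ) + 1)⁻¹ := by
    have h := rpow_half_sub_one_mul_sqrt (pow_pos hs 2)
    rw [Real.sqrt_sq hs.le] at h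
    rw [sub_zero, eq_inv_of_mul_eq_one_left h]
  calc ENNReal.ofReal (Real.log (m + 1) / 2)
      ≤ ENNReal.ofReal ((2 * (m : ℝ) + 1)⁻¹ * ((m + 1) * Real.log (m + 1))) := by
        refine ENNReal.ofReal_le_ofReal ?_
        rw [← mul_assoc, div_eq_mul_inv, mul_comm]
        refine mul_le_mul_of_nonneg_right ?_ (Real.log_nonneg (by linarith))
        rw [inv_mul_eq_div, le_div_iff₀ hs]
        linarith
    _ ≤ ENNReal.ofReal (((2 * (m : ℝ) + 1) ^ 2 - 0) ^ ((1 : ℝ) / 2 - 1)) *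
          ∫⁻ x in Ioo 0 ((2 * (m : ℝ) + 1) ^ 2), maximalFn1 (squareBlocks.indicator 1) x := by
        rw [hscale, ENNReal.ofReal_mul (by positivity)]
        gcongr
        exact ofReal_mul_log_le_setLIntegral_maximalFn1 m
    _ ≤ _ := le_morreyNorm1E _ _ (by positivity)

lemma morreyNorm1E_maximalFn1_squareBlocks_indicator :
    morreyNorm1E (1 / 2) (maximalFn1 (squareBlocks.indicator 1)) = ⊤ := by
  refine ENNReal.eq_top_of_forall_nnreal_le fun r => ?_
  obtain ⟨m, hm⟩ := exists_nat_ge (Real.exp (2 * r))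
  calc (r : ℝ≥0∞) = ENNReal.ofReal (Real.log (Real.exp (2 * r)) / 2) := by simp
    _ ≤ ENNReal.ofReal (Real.log (m + 1) / 2) := by
        gcongr
        linarith
    _ ≤ _ := ofReal_log_div_two_le_morreyNorm1E m

/-- The Hardy–Littlewood maximal operator is not bounded on
`M_{1,1/2}(ℝ)`: there is a nonnegative locally integrable `f` with
`‖f‖_{M_{1,1/2}} < ∞` but `‖Mf‖_{M_{1,1/2}} = ∞`. -/
theorem statement11 :
    ∃ f : ℝ → ℝ, (∀ x, 0 ≤ f x) ∧ LocallyIntegrable f volume ∧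
      morreyNorm1 (1/2) f < ⊤ ∧ morreyNorm1E (1/2) (maximalFn1 f) = ⊤ :=
  ⟨squareBlocks.indicator 1, indicator_nonneg fun _ _ => zero_le_one,
    (locallyIntegrable_const 1).indicator measurableSet_squareBlocks,
    morreyNorm1_squareBlocks_indicator_le.trans_lt ENNReal.ofNat_lt_top,
    morreyNorm1E_maximalFn1_squareBlocks_indicator⟩
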